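/- arXiv:2506.16954 — 2 statements merged into one kernel-verified Lean document; each statement's English description precedes it below -/
import Mathlib

section
/- There exists a space-like proper triharmonic 5-Frenet helix in the de Sitter space S⁵₁ = S⁵₁(1): namely, there exist an open interval I, a smooth unit-speed curve γ : I → {x ∈ ℝ⁶ : ⟪x,x⟫₁ = 1} and smooth fields F₁ = γ′, F₂, …, F₅ along γ tangent to the quadric with ⟪F_i,F_j⟫₁ = ε_iδ_ij, where ε₃ = −1 and ε_j = 1 for j ≠ 3, satisfying the Frenet equations with constant curvatures κ₁ = κ₂ = κ₃ = 1 and κ₄ = √2, such that γ is proper triharmonic: τ₃(γ) = ∇⁵F₁ + R(∇³F₁,F₁)F₁ − R(∇²F₁,∇F₁)F₁ ≡ 0 and ∇F₁ ≠ 0. -/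
open scoped BigOperators

noncomputable section

/-- The pseudo-Euclidean bilinear form of index `t` on `ℝⁿ` (modelled as `Fin n → ℝ`):
`⟪x,y⟫_t = −∑_{i<t} x_i y_i + ∑_{i≥t} x_i y_i`. -/
def pform (t : ℕ) {n : ℕ} (x y : Fin n → ℝ) : ℝ :=
  ∑ i : Fin n, (if i.val < t then -(x i * y i) else x i * y i)

/-- The covariant derivative along `γ` induced on the quadric `⟪x,x⟫_t = 1/c`:
`∇X = X′ − c⟪X′,γ⟫_t γ`. -/
def cov (t : ℕ) {n : ℕ} (c : ℝ) (γ X : ℝ → Fin n → ℝ) : ℝ → Fin n → ℝ :=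
  fun s => deriv X s - (c * pform t (deriv X s) (γ s)) • γ s

/-- The curvature operator of the space form: `R(X,Y)Z = c(⟪Y,Z⟫_t X − ⟪X,Z⟫_t Y)`. -/
def curvOp (t : ℕ) {n : ℕ} (c : ℝ) (X Y Z : Fin n → ℝ) : Fin n → ℝ :=
  c • (pform t Y Z • X - pform t X Z • Y)

/-- The `r`-tension field of a curve `γ` in the space form:
`τ_r(γ) = ∇^{2r−1}T + ∑_{ℓ=0}^{r−2} (−1)^ℓ R(∇^{2r−3−ℓ}T, ∇^ℓT)T` with `T = γ′`. -/
def tensionField (t : ℕ) {n : ℕ} (c : ℝ) (r : ℕ) (γ : ℝ → Fin n → ℝ) (s : ℝ) : Fin n → ℝ :=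
  (cov t c γ)^[2*r-1] (deriv γ) s
    + ∑ ℓ ∈ Finset.range (r-1), ((-1 : ℝ)^ℓ) •
        curvOp t c ((cov t c γ)^[2*r-3-ℓ] (deriv γ) s) ((cov t c γ)^[ℓ] (deriv γ) s) (deriv γ s)


local notation "rt2" => Real.sqrt 2
local notation "rt3" => Real.sqrt 3

lemma pform_eq (x y : Fin 6 → ℝ) : pform 1 x y =
    -(x 0*y 0) + x 1*y 1 + x 2*y 2 + x 3*y 3 + x 4*y 4 + x 5*y 5 := by
  simp [pform, Fin.sum_univ_six, show ((0:Fin 6):ℕ) = 0 from rfl,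
    show ((1:Fin 6):ℕ) = 1 from rfl, show ((2:Fin 6):ℕ) = 2 from rfl,
    show ((3:Fin 6):ℕ) = 3 from rfl, show ((4:Fin 6):ℕ) = 4 from rfl,
    show ((5:Fin 6):ℕ) = 5 from rfl]

lemma pform_comm {n : ℕ} (t : ℕ) (x y : Fin n → ℝ) : pform t x y = pform t y x := by
  simp only [pform, mul_comm]

lemma cval0 (x0 x1 x2 x3 x4 x5 : ℝ) : ![x0,x1,x2,x3,x4,x5] (0 : Fin 6) = x0 := rfl
lemma cval1 (x0 x1 x2 x3 x4 x5 : ℝ) : ![x0,x1,x2,x3,x4,x5] (1 : Fin 6) = x1 := rfl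
lemma cval2 (x0 x1 x2 x3 x4 x5 : ℝ) : ![x0,x1,x2,x3,x4,x5] (2 : Fin 6) = x2 := rfl
lemma cval3 (x0 x1 x2 x3 x4 x5 : ℝ) : ![x0,x1,x2,x3,x4,x5] (3 : Fin 6) = x3 := rfl
lemma cval4 (x0 x1 x2 x3 x4 x5 : ℝ) : ![x0,x1,x2,x3,x4,x5] (4 : Fin 6) = x4 := rfl
lemma cval5 (x0 x1 x2 x3 x4 x5 : ℝ) : ![x0,x1,x2,x3,x4,x5] (5 : Fin 6) = x5 := rfl


lemma dkSinh (k s : ℝ) : HasDerivAt (fun x => k * Real.sinh x) (k * Real.cosh s) s :=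
  (Real.hasDerivAt_sinh s).const_mul k

lemma dkCosh (k s : ℝ) : HasDerivAt (fun x => k * Real.cosh x) (k * Real.sinh s) s :=
  (Real.hasDerivAt_cosh s).const_mul k

lemma dkSin (k s : ℝ) : HasDerivAt (fun x => k * Real.sin x) (k * Real.cos s) s :=
  (Real.hasDerivAt_sin s).const_mul k

lemma dkCos (k s : ℝ) : HasDerivAt (fun x => k * Real.cos x) (-k * Real.sin s) s := by
  have h := (Real.hasDerivAt_cos s).const_mul k
  exact h.congr_deriv (by ring)

lemma dkSinC (k c s : ℝ) : HasDerivAt (fun x => k * Real.sin (c*x)) (k*c * Real.cos (c*s)) s := by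
  have h0 : HasDerivAt (fun x : ℝ => c*x) c s := by simpa using (hasDerivAt_id s).const_mul c
  have h := ((Real.hasDerivAt_sin (c*s)).comp s h0).const_mul k
  exact h.congr_deriv (by ring)

lemma dkCosC (k c s : ℝ) : HasDerivAt (fun x => k * Real.cos (c*x)) (-(k*c) * Real.sin (c*s)) s := by
  have h0 : HasDerivAt (fun x : ℝ => c*x) c s := by simpa using (hasDerivAt_id s).const_mul c
  have h := ((Real.hasDerivAt_cos (c*s)).comp s h0).const_mul k
  exact h.congr_deriv (by ring)

lemma dNegSin (s : ℝ) : HasDerivAt (fun x => -Real.sin x) (-Real.cos s) s :=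
  (Real.hasDerivAt_sin s).neg

def fG : ℝ → Fin 6 → ℝ := fun s =>
  ![rt2*rt3/6 * Real.sinh s, rt2*rt3/6 * Real.cosh s, rt2/2 * Real.cos s, rt2/2 * Real.sin s,
    rt3/3 * Real.cos (rt2*s), rt3/3 * Real.sin (rt2*s)]

def fT : ℝ → Fin 6 → ℝ := fun s =>
  ![rt2*rt3/6 * Real.cosh s, rt2*rt3/6 * Real.sinh s, -(rt2/2) * Real.sin s, rt2/2 * Real.cos s,
    -(rt3/3*rt2) * Real.sin (rt2*s), rt3/3*rt2 * Real.cos (rt2*s)]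

def fDT : ℝ → Fin 6 → ℝ := fun s =>
  ![rt2*rt3/6 * Real.sinh s, rt2*rt3/6 * Real.cosh s, -(rt2/2) * Real.cos s, -(rt2/2) * Real.sin s,
    -(rt3/3*rt2)*rt2 * Real.cos (rt2*s), -(rt3/3*rt2*rt2) * Real.sin (rt2*s)]

def fF2 : ℝ → Fin 6 → ℝ := fun s =>
  ![rt2*rt3/3 * Real.sinh s, rt2*rt3/3 * Real.cosh s, (0:ℝ), (0:ℝ),
    -(rt3/3) * Real.cos (rt2*s), -(rt3/3) * Real.sin (rt2*s)]

def fDF2 : ℝ → Fin 6 → ℝ := fun s =>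
  ![rt2*rt3/3 * Real.cosh s, rt2*rt3/3 * Real.sinh s, (0:ℝ), (0:ℝ),
    -(-(rt3/3)*rt2) * Real.sin (rt2*s), -(rt3/3)*rt2 * Real.cos (rt2*s)]

def fF3 : ℝ → Fin 6 → ℝ := fun s =>
  ![-(rt2*rt3/2) * Real.cosh s, -(rt2*rt3/2) * Real.sinh s, rt2/2 * Real.sin s,
    -(rt2/2) * Real.cos s, (0:ℝ), (0:ℝ)]

def fDF3 : ℝ → Fin 6 → ℝ := fun s =>
  ![-(rt2*rt3/2) * Real.sinh s, -(rt2*rt3/2) * Real.cosh s, rt2/2 * Real.cos s,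
    -(-(rt2/2)) * Real.sin s, (0:ℝ), (0:ℝ)]

def fF4 : ℝ → Fin 6 → ℝ := fun s =>
  ![-(rt2*rt3/6) * Real.sinh s, -(rt2*rt3/6) * Real.cosh s, rt2/2 * Real.cos s, rt2/2 * Real.sin s,
    -(rt3/3) * Real.cos (rt2*s), -(rt3/3) * Real.sin (rt2*s)]

def fDF4 : ℝ → Fin 6 → ℝ := fun s =>
  ![-(rt2*rt3/6) * Real.cosh s, -(rt2*rt3/6) * Real.sinh s, -(rt2/2) * Real.sin s, rt2/2 * Real.cos s,
    -(-(rt3/3)*rt2) * Real.sin (rt2*s), -(rt3/3)*rt2 * Real.cos (rt2*s)]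

def fF5 : ℝ → Fin 6 → ℝ := fun s =>
  ![rt3/3 * Real.cosh s, rt3/3 * Real.sinh s, -Real.sin s, Real.cos s,
    rt3/3 * Real.sin (rt2*s), -(rt3/3) * Real.cos (rt2*s)]

def fDF5 : ℝ → Fin 6 → ℝ := fun s =>
  ![rt3/3 * Real.sinh s, rt3/3 * Real.cosh s, -Real.cos s, -Real.sin s,
    rt3/3*rt2 * Real.cos (rt2*s), -(-(rt3/3)*rt2) * Real.sin (rt2*s)]

def fG2 : ℝ → Fin 6 → ℝ := fun s =>
  ![rt2*rt3/3 * Real.cosh s, rt2*rt3/3 * Real.sinh s, (0:ℝ), (0:ℝ),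
    rt2*rt3/3 * Real.sin (rt2*s), -(rt2*rt3/3) * Real.cos (rt2*s)]

def fDG2 : ℝ → Fin 6 → ℝ := fun s =>
  ![rt2*rt3/3 * Real.sinh s, rt2*rt3/3 * Real.cosh s, (0:ℝ), (0:ℝ),
    rt2*rt3/3*rt2 * Real.cos (rt2*s), -(-(rt2*rt3/3)*rt2) * Real.sin (rt2*s)]

def fG3 : ℝ → Fin 6 → ℝ := fun s =>
  ![rt2*rt3/6 * Real.sinh s, rt2*rt3/6 * Real.cosh s, -(rt2/2) * Real.cos s, -(rt2/2) * Real.sin s,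
    rt3/3 * Real.cos (rt2*s), rt3/3 * Real.sin (rt2*s)]

def fDG3 : ℝ → Fin 6 → ℝ := fun s =>
  ![rt2*rt3/6 * Real.cosh s, rt2*rt3/6 * Real.sinh s, -(-(rt2/2)) * Real.sin s, -(rt2/2) * Real.cos s,
    -(rt3/3*rt2) * Real.sin (rt2*s), rt3/3*rt2 * Real.cos (rt2*s)]

def fG4 : ℝ → Fin 6 → ℝ := fun s =>
  ![rt2*rt3/6 * Real.cosh s, rt2*rt3/6 * Real.sinh s, rt2/2 * Real.sin s, -(rt2/2) * Real.cos s,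
    -(rt3/3*rt2) * Real.sin (rt2*s), rt3/3*rt2 * Real.cos (rt2*s)]

def fG5 : ℝ → Fin 6 → ℝ := fun s =>
  ![rt2*rt3/6 * Real.sinh s, rt2*rt3/6 * Real.cosh s, rt2/2 * Real.cos s, -(-(rt2/2)) * Real.sin s,
    -(rt3/3*rt2)*rt2 * Real.cos (rt2*s), -(rt3/3*rt2*rt2) * Real.sin (rt2*s)]

lemma hdAtG (s : ℝ) : HasDerivAt fG (fT s) s := by
  refine hasDerivAt_pi.2 fun i => ?_
  fin_cases i
  · exact dkSinh _ _
  · exact dkCosh _ _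
  · exact dkCos _ _
  · exact dkSin _ _
  · exact dkCosC _ _ _
  · exact dkSinC _ _ _

lemma hdAtT (s : ℝ) : HasDerivAt fT (fDT s) s := by
  refine hasDerivAt_pi.2 fun i => ?_
  fin_cases i
  · exact dkCosh _ _
  · exact dkSinh _ _
  · exact dkSin _ _
  · exact dkCos _ _
  · exact dkSinC _ _ _
  · exact dkCosC _ _ _

lemma hdAtF2 (s : ℝ) : HasDerivAt fF2 (fDF2 s) s := by
  refine hasDerivAt_pi.2 fun i => ?_
  fin_cases i
  · exact dkSinh _ _
  · exact dkCosh _ _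
  · exact hasDerivAt_const _ _
  · exact hasDerivAt_const _ _
  · exact dkCosC _ _ _
  · exact dkSinC _ _ _

lemma hdAtF3 (s : ℝ) : HasDerivAt fF3 (fDF3 s) s := by
  refine hasDerivAt_pi.2 fun i => ?_
  fin_cases i
  · exact dkCosh _ _
  · exact dkSinh _ _
  · exact dkSin _ _
  · exact dkCos _ _
  · exact hasDerivAt_const _ _
  · exact hasDerivAt_const _ _

lemma hdAtF4 (s : ℝ) : HasDerivAt fF4 (fDF4 s) s := by
  refine hasDerivAt_pi.2 fun i => ?_
  fin_cases i
  · exact dkSinh _ _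
  · exact dkCosh _ _
  · exact dkCos _ _
  · exact dkSin _ _
  · exact dkCosC _ _ _
  · exact dkSinC _ _ _

lemma hdAtF5 (s : ℝ) : HasDerivAt fF5 (fDF5 s) s := by
  refine hasDerivAt_pi.2 fun i => ?_
  fin_cases i
  · exact dkCosh _ _
  · exact dkSinh _ _
  · exact dNegSin _
  · exact Real.hasDerivAt_cos s
  · exact dkSinC _ _ _
  · exact dkCosC _ _ _

lemma hdAtG2 (s : ℝ) : HasDerivAt fG2 (fDG2 s) s := by
  refine hasDerivAt_pi.2 fun i => ?_
  fin_cases i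
  · exact dkCosh _ _
  · exact dkSinh _ _
  · exact hasDerivAt_const _ _
  · exact hasDerivAt_const _ _
  · exact dkSinC _ _ _
  · exact dkCosC _ _ _

lemma hdAtG3 (s : ℝ) : HasDerivAt fG3 (fDG3 s) s := by
  refine hasDerivAt_pi.2 fun i => ?_
  fin_cases i
  · exact dkSinh _ _
  · exact dkCosh _ _
  · exact dkCos _ _
  · exact dkSin _ _
  · exact dkCosC _ _ _
  · exact dkSinC _ _ _

lemma hdAtG4 (s : ℝ) : HasDerivAt fG4 (fG5 s) s := by
  refine hasDerivAt_pi.2 fun i => ?_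
  fin_cases i
  · exact dkCosh _ _
  · exact dkSinh _ _
  · exact dkSin _ _
  · exact dkCos _ _
  · exact dkSinC _ _ _
  · exact dkCosC _ _ _

lemma hdG : deriv fG = fT := funext fun s => (hdAtG s).deriv
lemma hdT : deriv fT = fDT := funext fun s => (hdAtT s).deriv
lemma hdF2 : deriv fF2 = fDF2 := funext fun s => (hdAtF2 s).deriv
lemma hdF3 : deriv fF3 = fDF3 := funext fun s => (hdAtF3 s).deriv
lemma hdF4 : deriv fF4 = fDF4 := funext fun s => (hdAtF4 s).deriv
lemma hdF5 : deriv fF5 = fDF5 := funext fun s => (hdAtF5 s).deriv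
lemma hdG2 : deriv fG2 = fDG2 := funext fun s => (hdAtG2 s).deriv
lemma hdG3 : deriv fG3 = fDG3 := funext fun s => (hdAtG3 s).deriv
lemma hdG4 : deriv fG4 = fG5 := funext fun s => (hdAtG4 s).deriv

lemma pGG (s : ℝ) : pform 1 (fG s) (fG s) = 1 := by
  have h2 : Real.sqrt 2 ^ 2 = 2 := Real.sq_sqrt (by norm_num)
  have h3 : Real.sqrt 3 ^ 2 = 3 := Real.sq_sqrt (by norm_num)
  have hch := Real.cosh_sq s
  have hs1 := Real.sin_sq_add_cos_sq s
  have hs2 := Real.sin_sq_add_cos_sq (Real.sqrt 2 * s)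
  simp only [pform_eq, fG, fG, cval0, cval1, cval2, cval3, cval4, cval5]
  linear_combination (rt2^2*rt3^2/36) * hch + (rt2^2/4) * hs1 + (rt3^2/9) * hs2 + (rt3^2/36+1/4) * h2 + (1/6) * h3

lemma pTT (s : ℝ) : pform 1 (fT s) (fT s) = 1 := by
  have h2 : Real.sqrt 2 ^ 2 = 2 := Real.sq_sqrt (by norm_num)
  have h3 : Real.sqrt 3 ^ 2 = 3 := Real.sq_sqrt (by norm_num)
  have hch := Real.cosh_sq s
  have hs1 := Real.sin_sq_add_cos_sq s
  have hs2 := Real.sin_sq_add_cos_sq (Real.sqrt 2 * s)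
  simp only [pform_eq, fT, fT, cval0, cval1, cval2, cval3, cval4, cval5]
  linear_combination (-(rt2^2*rt3^2/36)) * hch + (rt2^2/4) * hs1 + (rt2^2*rt3^2/9) * hs2 + (rt3^2/12+1/4) * h2 + (1/6) * h3

lemma p22 (s : ℝ) : pform 1 (fF2 s) (fF2 s) = 1 := by
  have h2 : Real.sqrt 2 ^ 2 = 2 := Real.sq_sqrt (by norm_num)
  have h3 : Real.sqrt 3 ^ 2 = 3 := Real.sq_sqrt (by norm_num)
  have hch := Real.cosh_sq s
  have hs1 := Real.sin_sq_add_cos_sq s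
  have hs2 := Real.sin_sq_add_cos_sq (Real.sqrt 2 * s)
  simp only [pform_eq, fF2, fF2, cval0, cval1, cval2, cval3, cval4, cval5]
  linear_combination (rt2^2*rt3^2/9) * hch + (0) * hs1 + (rt3^2/9) * hs2 + (rt3^2/9) * h2 + (1/3) * h3

lemma p33 (s : ℝ) : pform 1 (fF3 s) (fF3 s) = -1 := by
  have h2 : Real.sqrt 2 ^ 2 = 2 := Real.sq_sqrt (by norm_num)
  have h3 : Real.sqrt 3 ^ 2 = 3 := Real.sq_sqrt (by norm_num)
  have hch := Real.cosh_sq s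
  have hs1 := Real.sin_sq_add_cos_sq s
  have hs2 := Real.sin_sq_add_cos_sq (Real.sqrt 2 * s)
  simp only [pform_eq, fF3, fF3, cval0, cval1, cval2, cval3, cval4, cval5]
  linear_combination (-(rt2^2*rt3^2/4)) * hch + (rt2^2/4) * hs1 + (0) * hs2 + (-(rt3^2/4)+1/4) * h2 + (-(1/2)) * h3

lemma p44 (s : ℝ) : pform 1 (fF4 s) (fF4 s) = 1 := by
  have h2 : Real.sqrt 2 ^ 2 = 2 := Real.sq_sqrt (by norm_num)
  have h3 : Real.sqrt 3 ^ 2 = 3 := Real.sq_sqrt (by norm_num)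
  have hch := Real.cosh_sq s
  have hs1 := Real.sin_sq_add_cos_sq s
  have hs2 := Real.sin_sq_add_cos_sq (Real.sqrt 2 * s)
  simp only [pform_eq, fF4, fF4, cval0, cval1, cval2, cval3, cval4, cval5]
  linear_combination (rt2^2*rt3^2/36) * hch + (rt2^2/4) * hs1 + (rt3^2/9) * hs2 + (rt3^2/36+1/4) * h2 + (1/6) * h3

lemma p55 (s : ℝ) : pform 1 (fF5 s) (fF5 s) = 1 := by
  have h2 : Real.sqrt 2 ^ 2 = 2 := Real.sq_sqrt (by norm_num)
  have h3 : Real.sqrt 3 ^ 2 = 3 := Real.sq_sqrt (by norm_num)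
  have hch := Real.cosh_sq s
  have hs1 := Real.sin_sq_add_cos_sq s
  have hs2 := Real.sin_sq_add_cos_sq (Real.sqrt 2 * s)
  simp only [pform_eq, fF5, fF5, cval0, cval1, cval2, cval3, cval4, cval5]
  linear_combination (-(rt3^2/9)) * hch + (1) * hs1 + (rt3^2/9) * hs2 + (0) * h2 + (0) * h3

lemma pT2 (s : ℝ) : pform 1 (fT s) (fF2 s) = 0 := by
  simp only [pform_eq, fT, fF2, cval0, cval1, cval2, cval3, cval4, cval5]
  ring

lemma pT3 (s : ℝ) : pform 1 (fT s) (fF3 s) = 0 := by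
  have h2 : Real.sqrt 2 ^ 2 = 2 := Real.sq_sqrt (by norm_num)
  have h3 : Real.sqrt 3 ^ 2 = 3 := Real.sq_sqrt (by norm_num)
  have hch := Real.cosh_sq s
  have hs1 := Real.sin_sq_add_cos_sq s
  have hs2 := Real.sin_sq_add_cos_sq (Real.sqrt 2 * s)
  simp only [pform_eq, fT, fF3, cval0, cval1, cval2, cval3, cval4, cval5]
  linear_combination (rt2^2*rt3^2/12) * hch + (-(rt2^2/4)) * hs1 + (0) * hs2 + (rt3^2/12-1/4) * h2 + (1/6) * h3

lemma pT4 (s : ℝ) : pform 1 (fT s) (fF4 s) = 0 := by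
  simp only [pform_eq, fT, fF4, cval0, cval1, cval2, cval3, cval4, cval5]
  ring

lemma pT5 (s : ℝ) : pform 1 (fT s) (fF5 s) = 0 := by
  have h2 : Real.sqrt 2 ^ 2 = 2 := Real.sq_sqrt (by norm_num)
  have h3 : Real.sqrt 3 ^ 2 = 3 := Real.sq_sqrt (by norm_num)
  have hch := Real.cosh_sq s
  have hs1 := Real.sin_sq_add_cos_sq s
  have hs2 := Real.sin_sq_add_cos_sq (Real.sqrt 2 * s)
  simp only [pform_eq, fT, fF5, cval0, cval1, cval2, cval3, cval4, cval5]
  linear_combination (-(rt2*rt3^2/18)) * hch + (rt2/2) * hs1 + (-(rt2*rt3^2/9)) * hs2 + (0) * h2 + (-(rt2/6)) * h3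

lemma p23 (s : ℝ) : pform 1 (fF2 s) (fF3 s) = 0 := by
  simp only [pform_eq, fF2, fF3, cval0, cval1, cval2, cval3, cval4, cval5]
  ring

lemma p24 (s : ℝ) : pform 1 (fF2 s) (fF4 s) = 0 := by
  have h2 : Real.sqrt 2 ^ 2 = 2 := Real.sq_sqrt (by norm_num)
  have h3 : Real.sqrt 3 ^ 2 = 3 := Real.sq_sqrt (by norm_num)
  have hch := Real.cosh_sq s
  have hs1 := Real.sin_sq_add_cos_sq s
  have hs2 := Real.sin_sq_add_cos_sq (Real.sqrt 2 * s)
  simp only [pform_eq, fF2, fF4, cval0, cval1, cval2, cval3, cval4, cval5]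
  linear_combination (-(rt2^2*rt3^2/18)) * hch + (0) * hs1 + (rt3^2/9) * hs2 + (-(rt3^2/18)) * h2 + (0) * h3

lemma p25 (s : ℝ) : pform 1 (fF2 s) (fF5 s) = 0 := by
  simp only [pform_eq, fF2, fF5, cval0, cval1, cval2, cval3, cval4, cval5]
  ring

lemma p34 (s : ℝ) : pform 1 (fF3 s) (fF4 s) = 0 := by
  simp only [pform_eq, fF3, fF4, cval0, cval1, cval2, cval3, cval4, cval5]
  ring

lemma p35 (s : ℝ) : pform 1 (fF3 s) (fF5 s) = 0 := by
  have h2 : Real.sqrt 2 ^ 2 = 2 := Real.sq_sqrt (by norm_num)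
  have h3 : Real.sqrt 3 ^ 2 = 3 := Real.sq_sqrt (by norm_num)
  have hch := Real.cosh_sq s
  have hs1 := Real.sin_sq_add_cos_sq s
  have hs2 := Real.sin_sq_add_cos_sq (Real.sqrt 2 * s)
  simp only [pform_eq, fF3, fF5, cval0, cval1, cval2, cval3, cval4, cval5]
  linear_combination (rt2*rt3^2/6) * hch + (-(rt2/2)) * hs1 + (0) * hs2 + (0) * h2 + (rt2/6) * h3

lemma p45 (s : ℝ) : pform 1 (fF4 s) (fF5 s) = 0 := by
  simp only [pform_eq, fF4, fF5, cval0, cval1, cval2, cval3, cval4, cval5]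
  ring

lemma p2G (s : ℝ) : pform 1 (fF2 s) (fG s) = 0 := by
  have h2 : Real.sqrt 2 ^ 2 = 2 := Real.sq_sqrt (by norm_num)
  have h3 : Real.sqrt 3 ^ 2 = 3 := Real.sq_sqrt (by norm_num)
  have hch := Real.cosh_sq s
  have hs1 := Real.sin_sq_add_cos_sq s
  have hs2 := Real.sin_sq_add_cos_sq (Real.sqrt 2 * s)
  simp only [pform_eq, fF2, fG, cval0, cval1, cval2, cval3, cval4, cval5]
  linear_combination (rt2^2*rt3^2/18) * hch + (0) * hs1 + (-(rt3^2/9)) * hs2 + (rt3^2/18) * h2 + (0) * h3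

lemma p3G (s : ℝ) : pform 1 (fF3 s) (fG s) = 0 := by
  simp only [pform_eq, fF3, fG, cval0, cval1, cval2, cval3, cval4, cval5]
  ring

lemma p4G (s : ℝ) : pform 1 (fF4 s) (fG s) = 0 := by
  have h2 : Real.sqrt 2 ^ 2 = 2 := Real.sq_sqrt (by norm_num)
  have h3 : Real.sqrt 3 ^ 2 = 3 := Real.sq_sqrt (by norm_num)
  have hch := Real.cosh_sq s
  have hs1 := Real.sin_sq_add_cos_sq s
  have hs2 := Real.sin_sq_add_cos_sq (Real.sqrt 2 * s)
  simp only [pform_eq, fF4, fG, cval0, cval1, cval2, cval3, cval4, cval5]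
  linear_combination (-(rt2^2*rt3^2/36)) * hch + (rt2^2/4) * hs1 + (-(rt3^2/9)) * hs2 + (-(rt3^2/36)+1/4) * h2 + (-(1/6)) * h3

lemma p5G (s : ℝ) : pform 1 (fF5 s) (fG s) = 0 := by
  simp only [pform_eq, fF5, fG, cval0, cval1, cval2, cval3, cval4, cval5]
  ring

lemma pDTG (s : ℝ) : pform 1 (fDT s) (fG s) = -1 := by
  have h2 : Real.sqrt 2 ^ 2 = 2 := Real.sq_sqrt (by norm_num)
  have h3 : Real.sqrt 3 ^ 2 = 3 := Real.sq_sqrt (by norm_num)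
  have hch := Real.cosh_sq s
  have hs1 := Real.sin_sq_add_cos_sq s
  have hs2 := Real.sin_sq_add_cos_sq (Real.sqrt 2 * s)
  simp only [pform_eq, fDT, fG, cval0, cval1, cval2, cval3, cval4, cval5]
  linear_combination (rt2^2*rt3^2/36) * hch + (-(rt2^2/4)) * hs1 + (-(rt2^2*rt3^2/9)) * hs2 + (-(rt3^2/12)-1/4) * h2 + (-(1/6)) * h3

lemma pD2G (s : ℝ) : pform 1 (fDF2 s) (fG s) = 0 := by
  simp only [pform_eq, fDF2, fG, cval0, cval1, cval2, cval3, cval4, cval5]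
  ring

lemma pD3G (s : ℝ) : pform 1 (fDF3 s) (fG s) = 0 := by
  have h2 : Real.sqrt 2 ^ 2 = 2 := Real.sq_sqrt (by norm_num)
  have h3 : Real.sqrt 3 ^ 2 = 3 := Real.sq_sqrt (by norm_num)
  have hch := Real.cosh_sq s
  have hs1 := Real.sin_sq_add_cos_sq s
  have hs2 := Real.sin_sq_add_cos_sq (Real.sqrt 2 * s)
  simp only [pform_eq, fDF3, fG, cval0, cval1, cval2, cval3, cval4, cval5]
  linear_combination (-(rt2^2*rt3^2/12)) * hch + (rt2^2/4) * hs1 + (0) * hs2 + (-(rt3^2/12)+1/4) * h2 + (-(1/6)) * h3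

lemma pD4G (s : ℝ) : pform 1 (fDF4 s) (fG s) = 0 := by
  simp only [pform_eq, fDF4, fG, cval0, cval1, cval2, cval3, cval4, cval5]
  ring

lemma pD5G (s : ℝ) : pform 1 (fDF5 s) (fG s) = 0 := by
  have h2 : Real.sqrt 2 ^ 2 = 2 := Real.sq_sqrt (by norm_num)
  have h3 : Real.sqrt 3 ^ 2 = 3 := Real.sq_sqrt (by norm_num)
  have hch := Real.cosh_sq s
  have hs1 := Real.sin_sq_add_cos_sq s
  have hs2 := Real.sin_sq_add_cos_sq (Real.sqrt 2 * s)
  simp only [pform_eq, fDF5, fG, cval0, cval1, cval2, cval3, cval4, cval5]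
  linear_combination (rt2*rt3^2/18) * hch + (-(rt2/2)) * hs1 + (rt2*rt3^2/9) * hs2 + (0) * h2 + (rt2/6) * h3

lemma pDG2G (s : ℝ) : pform 1 (fDG2 s) (fG s) = 1 := by
  have h2 : Real.sqrt 2 ^ 2 = 2 := Real.sq_sqrt (by norm_num)
  have h3 : Real.sqrt 3 ^ 2 = 3 := Real.sq_sqrt (by norm_num)
  have hch := Real.cosh_sq s
  have hs1 := Real.sin_sq_add_cos_sq s
  have hs2 := Real.sin_sq_add_cos_sq (Real.sqrt 2 * s)
  simp only [pform_eq, fDG2, fG, cval0, cval1, cval2, cval3, cval4, cval5]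
  linear_combination (rt2^2*rt3^2/18) * hch + (0) * hs1 + (rt2^2*rt3^2/9) * hs2 + (rt3^2/6) * h2 + (1/3) * h3

lemma pDG3G (s : ℝ) : pform 1 (fDG3 s) (fG s) = 0 := by
  simp only [pform_eq, fDG3, fG, cval0, cval1, cval2, cval3, cval4, cval5]
  ring

lemma pDG4G (s : ℝ) : pform 1 (fG5 s) (fG s) = 0 := by
  have h2 : Real.sqrt 2 ^ 2 = 2 := Real.sq_sqrt (by norm_num)
  have h3 : Real.sqrt 3 ^ 2 = 3 := Real.sq_sqrt (by norm_num)
  have hch := Real.cosh_sq s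
  have hs1 := Real.sin_sq_add_cos_sq s
  have hs2 := Real.sin_sq_add_cos_sq (Real.sqrt 2 * s)
  simp only [pform_eq, fG5, fG, cval0, cval1, cval2, cval3, cval4, cval5]
  linear_combination (rt2^2*rt3^2/36) * hch + (rt2^2/4) * hs1 + (-(rt2^2*rt3^2/9)) * hs2 + (-(rt3^2/12)+1/4) * h2 + (-(1/6)) * h3

lemma pG3T (s : ℝ) : pform 1 (fG3 s) (fT s) = 0 := by
  simp only [pform_eq, fG3, fT, cval0, cval1, cval2, cval3, cval4, cval5]
  ring

lemma pG2T (s : ℝ) : pform 1 (fG2 s) (fT s) = -1 := by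
  have h2 : Real.sqrt 2 ^ 2 = 2 := Real.sq_sqrt (by norm_num)
  have h3 : Real.sqrt 3 ^ 2 = 3 := Real.sq_sqrt (by norm_num)
  have hch := Real.cosh_sq s
  have hs1 := Real.sin_sq_add_cos_sq s
  have hs2 := Real.sin_sq_add_cos_sq (Real.sqrt 2 * s)
  simp only [pform_eq, fG2, fT, cval0, cval1, cval2, cval3, cval4, cval5]
  linear_combination (-(rt2^2*rt3^2/18)) * hch + (0) * hs1 + (-(rt2^2*rt3^2/9)) * hs2 + (-(rt3^2/6)) * h2 + (-(1/3)) * h3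

lemma pF2T (s : ℝ) : pform 1 (fF2 s) (fT s) = 0 := by
  rw [pform_comm]; exact pT2 s

lemma hcovT : cov 1 1 fG fT = fF2 := by
  funext s
  have h2 : Real.sqrt 2 ^ 2 = 2 := Real.sq_sqrt (by norm_num)
  simp only [cov, hdT, pDTG s]
  funext i
  fin_cases i <;>
    simp [fDT, fG, fF2, cval0, cval1, cval2, cval3, cval4, cval5] <;>
    first
      | ring1
      | tauto
      | exact Or.inl (by ring)
      | linear_combination (rt3 * Real.cos (rt2*s)/3) * h2
      | linear_combination (-(rt3 * Real.cos (rt2*s)/3)) * h2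
      | linear_combination (rt3 * Real.sin (rt2*s)/3) * h2
      | linear_combination (-(rt3 * Real.sin (rt2*s)/3)) * h2
      | linear_combination (rt3 * Real.sinh s/6) * h2
      | linear_combination (-(rt3 * Real.sinh s/6)) * h2
      | linear_combination (rt3 * Real.cosh s/6) * h2
      | linear_combination (-(rt3 * Real.cosh s/6)) * h2
      | linear_combination (Real.cos s/2) * h2
      | linear_combination (-(Real.cos s/2)) * h2
      | linear_combination (Real.sin s/2) * h2
      | linear_combination (-(Real.sin s/2)) * h2

lemma hcov2 : cov 1 1 fG fF2 = fG2 := by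
  funext s
  have h2 : Real.sqrt 2 ^ 2 = 2 := Real.sq_sqrt (by norm_num)
  simp only [cov, hdF2, pD2G s]
  funext i
  fin_cases i <;>
    simp [fDF2, fG, fG2, cval0, cval1, cval2, cval3, cval4, cval5] <;>
    first
      | ring1
      | tauto
      | exact Or.inl (by ring)
      | linear_combination (rt3 * Real.cos (rt2*s)/3) * h2
      | linear_combination (-(rt3 * Real.cos (rt2*s)/3)) * h2
      | linear_combination (rt3 * Real.sin (rt2*s)/3) * h2
      | linear_combination (-(rt3 * Real.sin (rt2*s)/3)) * h2
      | linear_combination (rt3 * Real.sinh s/6) * h2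
      | linear_combination (-(rt3 * Real.sinh s/6)) * h2
      | linear_combination (rt3 * Real.cosh s/6) * h2
      | linear_combination (-(rt3 * Real.cosh s/6)) * h2
      | linear_combination (Real.cos s/2) * h2
      | linear_combination (-(Real.cos s/2)) * h2
      | linear_combination (Real.sin s/2) * h2
      | linear_combination (-(Real.sin s/2)) * h2

lemma hcovG2 : cov 1 1 fG fG2 = fG3 := by
  funext s
  have h2 : Real.sqrt 2 ^ 2 = 2 := Real.sq_sqrt (by norm_num)
  simp only [cov, hdG2, pDG2G s]
  funext i
  fin_cases i <;>
    simp [fDG2, fG, fG3, cval0, cval1, cval2, cval3, cval4, cval5] <;>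
    first
      | ring1
      | tauto
      | exact Or.inl (by ring)
      | linear_combination (rt3 * Real.cos (rt2*s)/3) * h2
      | linear_combination (-(rt3 * Real.cos (rt2*s)/3)) * h2
      | linear_combination (rt3 * Real.sin (rt2*s)/3) * h2
      | linear_combination (-(rt3 * Real.sin (rt2*s)/3)) * h2
      | linear_combination (rt3 * Real.sinh s/6) * h2
      | linear_combination (-(rt3 * Real.sinh s/6)) * h2
      | linear_combination (rt3 * Real.cosh s/6) * h2
      | linear_combination (-(rt3 * Real.cosh s/6)) * h2
      | linear_combination (Real.cos s/2) * h2
      | linear_combination (-(Real.cos s/2)) * h2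
      | linear_combination (Real.sin s/2) * h2
      | linear_combination (-(Real.sin s/2)) * h2

lemma hcovG3 : cov 1 1 fG fG3 = fG4 := by
  funext s
  have h2 : Real.sqrt 2 ^ 2 = 2 := Real.sq_sqrt (by norm_num)
  simp only [cov, hdG3, pDG3G s]
  funext i
  fin_cases i <;>
    simp [fDG3, fG, fG4, cval0, cval1, cval2, cval3, cval4, cval5] <;>
    first
      | ring1
      | tauto
      | exact Or.inl (by ring)
      | linear_combination (rt3 * Real.cos (rt2*s)/3) * h2
      | linear_combination (-(rt3 * Real.cos (rt2*s)/3)) * h2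
      | linear_combination (rt3 * Real.sin (rt2*s)/3) * h2
      | linear_combination (-(rt3 * Real.sin (rt2*s)/3)) * h2
      | linear_combination (rt3 * Real.sinh s/6) * h2
      | linear_combination (-(rt3 * Real.sinh s/6)) * h2
      | linear_combination (rt3 * Real.cosh s/6) * h2
      | linear_combination (-(rt3 * Real.cosh s/6)) * h2
      | linear_combination (Real.cos s/2) * h2
      | linear_combination (-(Real.cos s/2)) * h2
      | linear_combination (Real.sin s/2) * h2
      | linear_combination (-(Real.sin s/2)) * h2

lemma hcovG4 : cov 1 1 fG fG4 = fG5 := by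
  funext s
  have h2 : Real.sqrt 2 ^ 2 = 2 := Real.sq_sqrt (by norm_num)
  simp only [cov, hdG4, pDG4G s]
  funext i
  fin_cases i <;>
    simp [fG5, fG, cval0, cval1, cval2, cval3, cval4, cval5] <;>
    first
      | ring1
      | tauto
      | exact Or.inl (by ring)
      | linear_combination (rt3 * Real.cos (rt2*s)/3) * h2
      | linear_combination (-(rt3 * Real.cos (rt2*s)/3)) * h2
      | linear_combination (rt3 * Real.sin (rt2*s)/3) * h2
      | linear_combination (-(rt3 * Real.sin (rt2*s)/3)) * h2
      | linear_combination (rt3 * Real.sinh s/6) * h2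
      | linear_combination (-(rt3 * Real.sinh s/6)) * h2
      | linear_combination (rt3 * Real.cosh s/6) * h2
      | linear_combination (-(rt3 * Real.cosh s/6)) * h2
      | linear_combination (Real.cos s/2) * h2
      | linear_combination (-(Real.cos s/2)) * h2
      | linear_combination (Real.sin s/2) * h2
      | linear_combination (-(Real.sin s/2)) * h2

lemma hcov3 (s : ℝ) : cov 1 1 fG fF3 s = -fF2 s + fF4 s := by
  have h2 : Real.sqrt 2 ^ 2 = 2 := Real.sq_sqrt (by norm_num)
  simp only [cov, hdF3, pD3G s]
  funext i
  fin_cases i <;>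
    simp [fDF3, fF2, fF4, fG, cval0, cval1, cval2, cval3, cval4, cval5] <;>
    first
      | ring1
      | tauto
      | exact Or.inl (by ring)
      | linear_combination (rt3 * Real.cos (rt2*s)/3) * h2
      | linear_combination (-(rt3 * Real.cos (rt2*s)/3)) * h2
      | linear_combination (rt3 * Real.sin (rt2*s)/3) * h2
      | linear_combination (-(rt3 * Real.sin (rt2*s)/3)) * h2
      | linear_combination (rt3 * Real.sinh s/6) * h2
      | linear_combination (-(rt3 * Real.sinh s/6)) * h2
      | linear_combination (rt3 * Real.cosh s/6) * h2
      | linear_combination (-(rt3 * Real.cosh s/6)) * h2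
      | linear_combination (Real.cos s/2) * h2
      | linear_combination (-(Real.cos s/2)) * h2
      | linear_combination (Real.sin s/2) * h2
      | linear_combination (-(Real.sin s/2)) * h2

lemma hcov4 (s : ℝ) : cov 1 1 fG fF4 s = fF3 s + Real.sqrt 2 • fF5 s := by
  have h2 : Real.sqrt 2 ^ 2 = 2 := Real.sq_sqrt (by norm_num)
  simp only [cov, hdF4, pD4G s]
  funext i
  fin_cases i <;>
    simp [fDF4, fF3, fF5, fG, cval0, cval1, cval2, cval3, cval4, cval5] <;>
    first
      | ring1
      | tauto
      | exact Or.inl (by ring)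
      | linear_combination (rt3 * Real.cos (rt2*s)/3) * h2
      | linear_combination (-(rt3 * Real.cos (rt2*s)/3)) * h2
      | linear_combination (rt3 * Real.sin (rt2*s)/3) * h2
      | linear_combination (-(rt3 * Real.sin (rt2*s)/3)) * h2
      | linear_combination (rt3 * Real.sinh s/6) * h2
      | linear_combination (-(rt3 * Real.sinh s/6)) * h2
      | linear_combination (rt3 * Real.cosh s/6) * h2
      | linear_combination (-(rt3 * Real.cosh s/6)) * h2
      | linear_combination (Real.cos s/2) * h2
      | linear_combination (-(Real.cos s/2)) * h2
      | linear_combination (Real.sin s/2) * h2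
      | linear_combination (-(Real.sin s/2)) * h2

lemma hcov5 (s : ℝ) : cov 1 1 fG fF5 s = (-(Real.sqrt 2)) • fF4 s := by
  have h2 : Real.sqrt 2 ^ 2 = 2 := Real.sq_sqrt (by norm_num)
  simp only [cov, hdF5, pD5G s]
  funext i
  fin_cases i <;>
    simp [fDF5, fF4, fG, cval0, cval1, cval2, cval3, cval4, cval5] <;>
    first
      | ring1
      | tauto
      | exact Or.inl (by ring)
      | linear_combination (rt3 * Real.cos (rt2*s)/3) * h2
      | linear_combination (-(rt3 * Real.cos (rt2*s)/3)) * h2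
      | linear_combination (rt3 * Real.sin (rt2*s)/3) * h2
      | linear_combination (-(rt3 * Real.sin (rt2*s)/3)) * h2
      | linear_combination (rt3 * Real.sinh s/6) * h2
      | linear_combination (-(rt3 * Real.sinh s/6)) * h2
      | linear_combination (rt3 * Real.cosh s/6) * h2
      | linear_combination (-(rt3 * Real.cosh s/6)) * h2
      | linear_combination (Real.cos s/2) * h2
      | linear_combination (-(Real.cos s/2)) * h2
      | linear_combination (Real.sin s/2) * h2
      | linear_combination (-(Real.sin s/2)) * h2

lemma cdG : ContDiff ℝ (⊤ : ℕ∞) fG := by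
  refine contDiff_pi.2 fun i => ?_
  fin_cases i
  · exact contDiff_const.mul Real.contDiff_sinh
  · exact contDiff_const.mul Real.contDiff_cosh
  · exact contDiff_const.mul Real.contDiff_cos
  · exact contDiff_const.mul Real.contDiff_sin
  · exact contDiff_const.mul (Real.contDiff_cos.comp (contDiff_const.mul contDiff_id))
  · exact contDiff_const.mul (Real.contDiff_sin.comp (contDiff_const.mul contDiff_id))

lemma cd2 : ContDiff ℝ (⊤ : ℕ∞) fF2 := by
  refine contDiff_pi.2 fun i => ?_
  fin_cases i
  · exact contDiff_const.mul Real.contDiff_sinh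
  · exact contDiff_const.mul Real.contDiff_cosh
  · exact contDiff_const
  · exact contDiff_const
  · exact contDiff_const.mul (Real.contDiff_cos.comp (contDiff_const.mul contDiff_id))
  · exact contDiff_const.mul (Real.contDiff_sin.comp (contDiff_const.mul contDiff_id))

lemma cd3 : ContDiff ℝ (⊤ : ℕ∞) fF3 := by
  refine contDiff_pi.2 fun i => ?_
  fin_cases i
  · exact contDiff_const.mul Real.contDiff_cosh
  · exact contDiff_const.mul Real.contDiff_sinh
  · exact contDiff_const.mul Real.contDiff_sin
  · exact contDiff_const.mul Real.contDiff_cos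
  · exact contDiff_const
  · exact contDiff_const

lemma cd4 : ContDiff ℝ (⊤ : ℕ∞) fF4 := by
  refine contDiff_pi.2 fun i => ?_
  fin_cases i
  · exact contDiff_const.mul Real.contDiff_sinh
  · exact contDiff_const.mul Real.contDiff_cosh
  · exact contDiff_const.mul Real.contDiff_cos
  · exact contDiff_const.mul Real.contDiff_sin
  · exact contDiff_const.mul (Real.contDiff_cos.comp (contDiff_const.mul contDiff_id))
  · exact contDiff_const.mul (Real.contDiff_sin.comp (contDiff_const.mul contDiff_id))

lemma cd5 : ContDiff ℝ (⊤ : ℕ∞) fF5 := by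
  refine contDiff_pi.2 fun i => ?_
  fin_cases i
  · exact contDiff_const.mul Real.contDiff_cosh
  · exact contDiff_const.mul Real.contDiff_sinh
  · exact Real.contDiff_sin.neg
  · exact Real.contDiff_cos
  · exact contDiff_const.mul (Real.contDiff_sin.comp (contDiff_const.mul contDiff_id))
  · exact contDiff_const.mul (Real.contDiff_cos.comp (contDiff_const.mul contDiff_id))

/-- There exists a space-like proper triharmonic `5`-Frenet helix in the
de Sitter space `S⁵₁ = S⁵₁(1)`, with `ε₃ = −1`, `ε_j = 1` for `j ≠ 3`, constant curvatures
`κ₁ = κ₂ = κ₃ = 1` and `κ₄ = √2`. -/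
theorem stmt_14 :
    ∃ (I : Set ℝ) (γ F₂ F₃ F₄ F₅ : ℝ → Fin 6 → ℝ),
      IsOpen I ∧ I.Nonempty ∧
      ContDiffOn ℝ (⊤ : ℕ∞) γ I ∧ ContDiffOn ℝ (⊤ : ℕ∞) F₂ I ∧ ContDiffOn ℝ (⊤ : ℕ∞) F₃ I ∧
      ContDiffOn ℝ (⊤ : ℕ∞) F₄ I ∧ ContDiffOn ℝ (⊤ : ℕ∞) F₅ I ∧
      (∀ s ∈ I, pform 1 (γ s) (γ s) = 1) ∧
      -- orthonormal frame with ε₁ = ε₂ = ε₄ = ε₅ = 1 and ε₃ = −1 (γ space-like)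
      (∀ s ∈ I, pform 1 (deriv γ s) (deriv γ s) = 1) ∧
      (∀ s ∈ I, pform 1 (F₂ s) (F₂ s) = 1) ∧
      (∀ s ∈ I, pform 1 (F₃ s) (F₃ s) = -1) ∧
      (∀ s ∈ I, pform 1 (F₄ s) (F₄ s) = 1) ∧
      (∀ s ∈ I, pform 1 (F₅ s) (F₅ s) = 1) ∧
      (∀ s ∈ I, pform 1 (deriv γ s) (F₂ s) = 0) ∧
      (∀ s ∈ I, pform 1 (deriv γ s) (F₃ s) = 0) ∧
      (∀ s ∈ I, pform 1 (deriv γ s) (F₄ s) = 0) ∧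
      (∀ s ∈ I, pform 1 (deriv γ s) (F₅ s) = 0) ∧
      (∀ s ∈ I, pform 1 (F₂ s) (F₃ s) = 0) ∧
      (∀ s ∈ I, pform 1 (F₂ s) (F₄ s) = 0) ∧
      (∀ s ∈ I, pform 1 (F₂ s) (F₅ s) = 0) ∧
      (∀ s ∈ I, pform 1 (F₃ s) (F₄ s) = 0) ∧
      (∀ s ∈ I, pform 1 (F₃ s) (F₅ s) = 0) ∧
      (∀ s ∈ I, pform 1 (F₄ s) (F₅ s) = 0) ∧
      -- the frame fields are tangent to the quadric
      (∀ s ∈ I, pform 1 (F₂ s) (γ s) = 0) ∧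
      (∀ s ∈ I, pform 1 (F₃ s) (γ s) = 0) ∧
      (∀ s ∈ I, pform 1 (F₄ s) (γ s) = 0) ∧
      (∀ s ∈ I, pform 1 (F₅ s) (γ s) = 0) ∧
      -- Frenet equations with κ₁ = κ₂ = κ₃ = 1, κ₄ = √2, ε₃ = −1 and ε_j = 1 otherwise
      (∀ s ∈ I, cov 1 1 γ (deriv γ) s = F₂ s) ∧
      (∀ s ∈ I, cov 1 1 γ F₂ s = -deriv γ s + (-1 : ℝ) • F₃ s) ∧
      (∀ s ∈ I, cov 1 1 γ F₃ s = -F₂ s + F₄ s) ∧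
      (∀ s ∈ I, cov 1 1 γ F₄ s = F₃ s + Real.sqrt 2 • F₅ s) ∧
      (∀ s ∈ I, cov 1 1 γ F₅ s = (-(Real.sqrt 2)) • F₄ s) ∧
      -- proper triharmonicity
      (∀ s ∈ I, tensionField 1 1 3 γ s = 0) ∧
      (∀ s ∈ I, cov 1 1 γ (deriv γ) s ≠ 0) := by
  refine ⟨Set.univ, fG, fF2, fF3, fF4, fF5, isOpen_univ, Set.univ_nonempty,
    cdG.contDiffOn, cd2.contDiffOn, cd3.contDiffOn, cd4.contDiffOn, cd5.contDiffOn,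
    fun s _ => pGG s,
    fun s _ => by rw [hdG]; exact pTT s,
    fun s _ => p22 s, fun s _ => p33 s, fun s _ => p44 s, fun s _ => p55 s,
    fun s _ => by rw [hdG]; exact pT2 s,
    fun s _ => by rw [hdG]; exact pT3 s,
    fun s _ => by rw [hdG]; exact pT4 s,
    fun s _ => by rw [hdG]; exact pT5 s,
    fun s _ => p23 s, fun s _ => p24 s, fun s _ => p25 s,
    fun s _ => p34 s, fun s _ => p35 s, fun s _ => p45 s,
    fun s _ => p2G s, fun s _ => p3G s, fun s _ => p4G s, fun s _ => p5G s,
    fun s _ => by rw [hdG, hcovT],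
    fun s _ => ?_,
    fun s _ => hcov3 s, fun s _ => hcov4 s, fun s _ => hcov5 s,
    fun s _ => ?_, fun s _ => ?_⟩
  · -- cov of F₂
    have h2 : Real.sqrt 2 ^ 2 = 2 := Real.sq_sqrt (by norm_num)
    rw [hcov2, hdG]
    funext i
    fin_cases i <;>
      simp [fG2, fT, fF3, cval0, cval1, cval2, cval3, cval4, cval5] <;>
      first
      | ring1
      | tauto
      | exact Or.inl (by ring)
      | linear_combination (rt3 * Real.cos (rt2*s)/3) * h2
      | linear_combination (-(rt3 * Real.cos (rt2*s)/3)) * h2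
      | linear_combination (rt3 * Real.sin (rt2*s)/3) * h2
      | linear_combination (-(rt3 * Real.sin (rt2*s)/3)) * h2
      | linear_combination (rt3 * Real.sinh s/6) * h2
      | linear_combination (-(rt3 * Real.sinh s/6)) * h2
      | linear_combination (rt3 * Real.cosh s/6) * h2
      | linear_combination (-(rt3 * Real.cosh s/6)) * h2
      | linear_combination (Real.cos s/2) * h2
      | linear_combination (-(Real.cos s/2)) * h2
      | linear_combination (Real.sin s/2) * h2
      | linear_combination (-(Real.sin s/2)) * h2
  · -- triharmonicity
    have h2 : Real.sqrt 2 ^ 2 = 2 := Real.sq_sqrt (by norm_num)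
    have e1 : (cov 1 1 fG)^[1] fT = fF2 := by rw [Function.iterate_one, hcovT]
    have e2 : (cov 1 1 fG)^[2] fT = fG2 := by
      rw [show (2:ℕ) = 1+1 from rfl, Function.iterate_succ_apply, hcovT, Function.iterate_one,
        hcov2]
    have e3 : (cov 1 1 fG)^[3] fT = fG3 := by
      rw [show (3:ℕ) = 2+1 from rfl, Function.iterate_succ_apply, hcovT, show (2:ℕ) = 1+1 from rfl,
        Function.iterate_succ_apply, hcov2, Function.iterate_one, hcovG2]
    have e5 : (cov 1 1 fG)^[5] fT = fG5 := by
      rw [show (5:ℕ) = 4+1 from rfl, Function.iterate_succ_apply, hcovT, show (4:ℕ) = 3+1 from rfl,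
        Function.iterate_succ_apply, hcov2, show (3:ℕ) = 2+1 from rfl, Function.iterate_succ_apply,
        hcovG2, show (2:ℕ) = 1+1 from rfl, Function.iterate_succ_apply, hcovG3,
        Function.iterate_one, hcovG4]
    simp only [tensionField, show (2*3-1 : ℕ) = 5 from rfl, show (3-1 : ℕ) = 2 from rfl,
      show (2*3-3-0 : ℕ) = 3 from rfl, show (2*3-3-1 : ℕ) = 2 from rfl,
      Finset.sum_range_succ, Finset.sum_range_zero, Function.iterate_zero, id_eq, hdG]
    rw [e5, e3, e2, e1]
    simp only [curvOp, pTT s, pG3T s, pF2T s, pG2T s]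
    funext i
    fin_cases i <;>
      simp [fG5, fG3, fF2, fT, fG2, cval0, cval1, cval2, cval3, cval4, cval5] <;>
      first
      | ring1
      | tauto
      | exact Or.inl (by ring)
      | linear_combination (rt3 * Real.cos (rt2*s)/3) * h2
      | linear_combination (-(rt3 * Real.cos (rt2*s)/3)) * h2
      | linear_combination (rt3 * Real.sin (rt2*s)/3) * h2
      | linear_combination (-(rt3 * Real.sin (rt2*s)/3)) * h2
      | linear_combination (rt3 * Real.sinh s/6) * h2
      | linear_combination (-(rt3 * Real.sinh s/6)) * h2
      | linear_combination (rt3 * Real.cosh s/6) * h2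
      | linear_combination (-(rt3 * Real.cosh s/6)) * h2
      | linear_combination (Real.cos s/2) * h2
      | linear_combination (-(Real.cos s/2)) * h2
      | linear_combination (Real.sin s/2) * h2
      | linear_combination (-(Real.sin s/2)) * h2
  · -- nonvanishing
    rw [hdG, hcovT]
    intro h
    have h1 : rt2*rt3/3 * Real.cosh s = 0 := congrFun h 1
    have hpos : 0 < rt2*rt3/3 * Real.cosh s := by positivity
    exact hpos.ne' h1
end
end

section
/- Let c > 0, m ≥ 4, r ≥ 2. Let α : ℝ → S^{m−1}(c) be a 3-Frenet helix in the round sphere with constant curvatures κ_α, τ_α > 0. Fix ε₁ ∈ {−1,1} and d₁ ∈ ℝ with d₁ ≠ 0 and ε₁ + d₁² > 0, set d₂ = √(ε₁ + d₁²), and define the unit-speed curve γ(s) = (d₁s, α(d₂s)) in the Lorentzian hypersurface M_c (so ⟪γ′,γ′⟫ = ε₁). Suppose γ is a 3-Frenet curve in M_c: there are smooth fields N, B along γ tangent to M_c such that {T = γ′, N, B} is ⟪,⟫-orthonormal with signs ε₁, ε₂, ε₃ and there are smooth positive functions κ, τ with ∇T = ε₂κN, ∇N = −ε₁κT + ε₃τB,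 ∇B = −ε₂τN; assume moreover ε₃(τ_α² − ε₁d₁²κ_α²) > 0. Then κ and τ are constant (γ is a helix), ε₁κ² + ε₃τ² ≠ 0, and γ is proper r-harmonic in M_c (τ_r(γ) ≡ 0) if and only if α is proper r-harmonic in S^{m−1}(c) (τ_r^S(α) ≡ 0). -/
open scoped BigOperators

noncomputable section

/-- Spatial projection `π(x₀,x₁,…,x_m) = (0,x₁,…,x_m)` on `ℝ^{m+1}`. -/
def proj {m : ℕ} (x : Fin (m+1) → ℝ) : Fin (m+1) → ℝ :=
  fun i => if i = 0 then 0 else x i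

/-- Covariant derivative along `γ` induced on the Lorentzian hypersurface
`M_c = {x : ∑_{i≥1} x_i² = 1/c}`: `∇X = X′ − c⟪X′, π∘γ⟫ (π∘γ)`. -/
def covM {m : ℕ} (c : ℝ) (γ X : ℝ → Fin (m+1) → ℝ) : ℝ → Fin (m+1) → ℝ :=
  fun s => deriv X s - (c * pform 1 (deriv X s) (proj (γ s))) • proj (γ s)

/-- Curvature operator of `M_c`: `R(X,Y)Z = c(⟪πY,πZ⟫πX − ⟪πX,πZ⟫πY)`. -/
def curvOpM {m : ℕ} (c : ℝ) (X Y Z : Fin (m+1) → ℝ) : Fin (m+1) → ℝ :=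
  c • (pform 1 (proj Y) (proj Z) • proj X - pform 1 (proj X) (proj Z) • proj Y)

/-- The `r`-tension field of a curve `γ` in `M_c`. -/
def tensionM {m : ℕ} (c : ℝ) (r : ℕ) (γ : ℝ → Fin (m+1) → ℝ) (s : ℝ) : Fin (m+1) → ℝ :=
  (covM c γ)^[2*r-1] (deriv γ) s
    + ∑ ℓ ∈ Finset.range (r-1), ((-1 : ℝ)^ℓ) •
        curvOpM c ((covM c γ)^[2*r-3-ℓ] (deriv γ) s) ((covM c γ)^[ℓ] (deriv γ) s) (deriv γ s)

lemma pform_one_cons {m : ℕ} (a b : ℝ) (v w : Fin m → ℝ) :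
    pform 1 (Fin.cons a v) (Fin.cons b w) = -(a*b) + pform 0 v w := by
  simp [pform, Fin.sum_univ_succ]

lemma pform_smul_left (t : ℕ) {n : ℕ} (k : ℝ) (x y : Fin n → ℝ) :
    pform t (k • x) y = k * pform t x y := by
  simp only [pform, Pi.smul_apply, smul_eq_mul, Finset.mul_sum]
  exact Finset.sum_congr rfl fun i _ => by split <;> ring

lemma pform_smul_right (t : ℕ) {n : ℕ} (k : ℝ) (x y : Fin n → ℝ) :
    pform t x (k • y) = k * pform t x y := by
  simp only [pform, Pi.smul_apply, smul_eq_mul, Finset.mul_sum]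
  exact Finset.sum_congr rfl fun i _ => by split <;> ring

lemma pform_zero_expand {n : ℕ} (x y : ℝ) (a b : Fin n → ℝ) :
    pform 0 (x • a + y • b) (x • a + y • b)
      = x^2 * pform 0 a a + 2*x*y * pform 0 a b + y^2 * pform 0 b b := by
  simp only [pform, Nat.not_lt_zero, if_false, Pi.add_apply, Pi.smul_apply, smul_eq_mul,
    Finset.mul_sum, ← Finset.sum_add_distrib]
  exact Finset.sum_congr rfl fun i _ => by ring

lemma proj_cons {m : ℕ} (a : ℝ) (v : Fin m → ℝ) :
    proj (Fin.cons a v) = Fin.cons (0:ℝ) v := by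
  funext i
  cases i using Fin.cases with
  | zero => simp [proj]
  | succ j => simp [proj, Fin.succ_ne_zero]

lemma cons_sub {m : ℕ} (a b : ℝ) (v w : Fin m → ℝ) :
    (Fin.cons a v - Fin.cons b w : Fin (m+1) → ℝ) = Fin.cons (a-b) (v-w) := by
  funext i
  cases i using Fin.cases <;> simp

lemma cons_add {m : ℕ} (a b : ℝ) (v w : Fin m → ℝ) :
    (Fin.cons a v + Fin.cons b w : Fin (m+1) → ℝ) = Fin.cons (a+b) (v+w) := by
  funext i
  cases i using Fin.cases <;> simp

lemma smul_cons {m : ℕ} (k a : ℝ) (v : Fin m → ℝ) :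
    k • (Fin.cons a v : Fin (m+1) → ℝ) = Fin.cons (k*a) (k • v) := by
  funext i
  cases i using Fin.cases <;> simp

lemma cons_zero_zero {m : ℕ} : (Fin.cons (0:ℝ) (0 : Fin m → ℝ) : Fin (m+1) → ℝ) = 0 := by
  funext i
  cases i using Fin.cases <;> simp

lemma sum_cons_zero {m : ℕ} {ι : Type*} (s : Finset ι) (f : ι → Fin m → ℝ) :
    ∑ i ∈ s, (Fin.cons (0:ℝ) (f i) : Fin (m+1) → ℝ) = Fin.cons 0 (∑ i ∈ s, f i) := by
  funext j
  rw [Finset.sum_apply]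
  cases j using Fin.cases <;> simp

lemma contDiff_pform (t : ℕ) {n : ℕ} {X Y : ℝ → Fin n → ℝ}
    (hX : ContDiff ℝ (⊤:ℕ∞) X) (hY : ContDiff ℝ (⊤:ℕ∞) Y) :
    ContDiff ℝ (⊤:ℕ∞) (fun s => pform t (X s) (Y s)) := by
  unfold pform
  apply ContDiff.sum
  intro i _
  by_cases h : i.val < t <;> simp only [h, if_true, if_false]
  · exact ((contDiff_pi.mp hX i).mul (contDiff_pi.mp hY i)).neg
  · exact (contDiff_pi.mp hX i).mul (contDiff_pi.mp hY i)

lemma contDiff_cov (t : ℕ) {n : ℕ} (c : ℝ) {α X : ℝ → Fin n → ℝ}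
    (hα : ContDiff ℝ (⊤:ℕ∞) α) (hX : ContDiff ℝ (⊤:ℕ∞) X) :
    ContDiff ℝ (⊤:ℕ∞) (cov t c α X) := by
  have hX' : ContDiff ℝ (⊤:ℕ∞) (deriv X) := (contDiff_infty_iff_deriv.mp hX).2
  exact hX'.sub (((contDiff_const.mul (contDiff_pform t hX' hα)).smul hα))

lemma contDiff_cov_iter (t : ℕ) {n : ℕ} (c : ℝ) {α X : ℝ → Fin n → ℝ}
    (hα : ContDiff ℝ (⊤:ℕ∞) α) (hX : ContDiff ℝ (⊤:ℕ∞) X) (k : ℕ) :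
    ContDiff ℝ (⊤:ℕ∞) ((cov t c α)^[k] X) := by
  induction k with
  | zero => exact hX
  | succ k ih => rw [Function.iterate_succ_apply']; exact contDiff_cov t c hα ih

lemma deriv_cons_comp {m : ℕ} (G : ℝ → Fin m → ℝ) (hG : Differentiable ℝ G)
    (a b d e s : ℝ) :
    deriv (fun s => (Fin.cons (a*s+b) (e • G (d*s)) : Fin (m+1) → ℝ)) s
      = Fin.cons a ((e*d) • deriv G (d*s)) := by
  have H : HasDerivAt (fun s => (Fin.cons (a*s+b) (e • G (d*s)) : Fin (m+1) → ℝ))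
      (Fin.cons a ((e*d) • deriv G (d*s))) s := by
    rw [hasDerivAt_pi]
    intro i
    cases i using Fin.cases with
    | zero =>
        simp only [Fin.cons_zero]
        simpa using (((hasDerivAt_id s).const_mul a).add_const b)
    | succ j =>
        simp only [Fin.cons_succ, Pi.smul_apply, smul_eq_mul]
        have h1 : HasDerivAt G (deriv G (d*s)) (d*s) :=
          (hG (d*s)).hasDerivAt
        have h2 : HasDerivAt (fun u => G u j) (deriv G (d*s) j) (d*s) :=
          hasDerivAt_pi.mp h1 j
        have h3 : HasDerivAt (fun s : ℝ => d * s) d s := by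
          simpa using (hasDerivAt_id s).const_mul d
        have h4 : HasDerivAt (fun s => G (d*s) j) (deriv G (d*s) j * d) s :=
          h2.comp s h3
        have h5 := h4.const_mul e
        convert h5 using 1
        case e'_9 => ring
        rfl
  exact H.deriv

lemma covM_cons {m : ℕ} (c d₁ d₂ : ℝ) (α G : ℝ → Fin m → ℝ) (hG : Differentiable ℝ G)
    (b e : ℝ) (s : ℝ) :
    covM c (fun s => Fin.cons (d₁*s) (α (d₂*s))) (fun s => Fin.cons b (e • G (d₂*s))) s
      = Fin.cons 0 ((e*d₂) • cov 0 c α G (d₂*s)) := by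
  have hX : (fun s => (Fin.cons b (e • G (d₂*s)) : Fin (m+1) → ℝ))
      = fun s => Fin.cons (0*s+b) (e • G (d₂*s)) := by
    funext u; norm_num
  unfold covM
  rw [hX, deriv_cons_comp G hG 0 b d₂ e s]
  show Fin.cons 0 ((e * d₂) • deriv G (d₂ * s)) -
      (c * pform 1 (Fin.cons 0 ((e * d₂) • deriv G (d₂ * s))) (proj (Fin.cons (d₁*s) (α (d₂*s))))) •
        proj (Fin.cons (d₁*s) (α (d₂*s))) = _
  rw [proj_cons, pform_one_cons, smul_cons, cons_sub]
  unfold cov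
  rw [pform_smul_left]
  funext i
  cases i using Fin.cases with
  | zero => simp
  | succ j =>
      simp only [Fin.cons_succ, Pi.smul_apply, Pi.sub_apply, smul_eq_mul]
      ring

lemma deriv_gamma {m : ℕ} (d₁ d₂ : ℝ) (α : ℝ → Fin m → ℝ) (hα : Differentiable ℝ α) (s : ℝ) :
    deriv (fun s => (Fin.cons (d₁*s) (α (d₂*s)) : Fin (m+1) → ℝ)) s
      = Fin.cons d₁ (d₂ • deriv α (d₂*s)) := by
  have h : (fun s => (Fin.cons (d₁*s) (α (d₂*s)) : Fin (m+1) → ℝ))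
      = fun s => Fin.cons (d₁*s+0) ((1:ℝ) • α (d₂*s)) := by
    funext u; norm_num
  rw [h, deriv_cons_comp α hα d₁ 0 d₂ 1 s, one_mul]

lemma covM_iter {m : ℕ} (c d₁ d₂ : ℝ) (α : ℝ → Fin m → ℝ) (hα : ContDiff ℝ (⊤:ℕ∞) α)
    (γ : ℝ → Fin (m+1) → ℝ) (hγ : γ = fun s => Fin.cons (d₁*s) (α (d₂*s))) :
    ∀ k s, (covM c γ)^[k+1] (deriv γ) s
      = Fin.cons 0 (d₂^(k+2) • ((cov 0 c α)^[k+1] (deriv α)) (d₂*s)) := by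
  have hα' : ContDiff ℝ (⊤:ℕ∞) (deriv α) := (contDiff_infty_iff_deriv.mp hα).2
  have hdγ : deriv γ = fun s => Fin.cons d₁ (d₂ • deriv α (d₂*s)) := by
    funext s
    rw [hγ, deriv_gamma d₁ d₂ α (hα.differentiable (by simp)) s]
  intro k
  induction k with
  | zero =>
      intro s
      rw [Function.iterate_one, hdγ, hγ,
        covM_cons c d₁ d₂ α (deriv α) (hα'.differentiable (by simp)) d₁ d₂ s]
      norm_num [Function.iterate_one, pow_two]
  | succ k ih =>
      intro s
      rw [show k+1+1 = (k+1)+1 from rfl, Function.iterate_succ_apply']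
      have hfun : (covM c γ)^[k+1] (deriv γ)
          = fun s => Fin.cons (0:ℝ) (d₂^(k+2) • ((cov 0 c α)^[k+1] (deriv α)) (d₂*s)) := by
        funext u; exact ih u
      rw [hfun, hγ]
      have hG : Differentiable ℝ ((cov 0 c α)^[k+1] (deriv α)) :=
        (contDiff_cov_iter 0 c hα hα' (k+1)).differentiable (by simp)
      rw [covM_cons c d₁ d₂ α _ hG 0 (d₂^(k+2)) s,
        show (cov 0 c α)^[k+1+1] (deriv α) = cov 0 c α ((cov 0 c α)^[k+1] (deriv α)) from
          Function.iterate_succ_apply' _ _ _,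
        show (d₂^(k+2))*d₂ = d₂^(k+1+2) by ring]

lemma curvOpM_lift {m : ℕ} (c : ℝ) (X Y Z : Fin (m+1) → ℝ) (x y z : Fin m → ℝ)
    (hX : proj X = Fin.cons 0 x) (hY : proj Y = Fin.cons 0 y) (hZ : proj Z = Fin.cons 0 z) :
    curvOpM c X Y Z = Fin.cons 0 (curvOp 0 c x y z) := by
  unfold curvOpM curvOp
  rw [hX, hY, hZ, pform_one_cons, pform_one_cons, smul_cons, smul_cons, cons_sub, smul_cons]
  funext i
  cases i using Fin.cases with
  | zero => simp
  | succ j => simp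

lemma curvOp_smul {n : ℕ} (c p q u : ℝ) (x y z : Fin n → ℝ) :
    curvOp 0 c (p • x) (q • y) (u • z) = (p*q*u) • curvOp 0 c x y z := by
  unfold curvOp
  rw [pform_smul_left, pform_smul_right, pform_smul_left, pform_smul_right]
  funext i
  simp only [Pi.smul_apply, Pi.sub_apply, smul_eq_mul]
  ring

lemma tension_lift {m : ℕ} (r : ℕ) (hr : 2 ≤ r) (c d₁ d₂ : ℝ) (α : ℝ → Fin m → ℝ)
    (hα : ContDiff ℝ (⊤:ℕ∞) α)
    (γ : ℝ → Fin (m+1) → ℝ) (hγ : γ = fun s => Fin.cons (d₁*s) (α (d₂*s))) (s : ℝ) :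
    tensionM c r γ s = Fin.cons 0 (d₂^(2*r) • tensionField 0 c r α (d₂*s)) := by
  have hproj : ∀ ℓ, proj ((covM c γ)^[ℓ] (deriv γ) s)
      = Fin.cons 0 (d₂^(ℓ+1) • ((cov 0 c α)^[ℓ] (deriv α)) (d₂*s)) := by
    intro ℓ
    cases ℓ with
    | zero =>
        have hdγ : deriv γ s = Fin.cons d₁ (d₂ • deriv α (d₂*s)) := by
          rw [hγ]
          exact deriv_gamma d₁ d₂ α (hα.differentiable (by simp)) s
        show proj (deriv γ s) = _
        rw [hdγ, proj_cons, pow_one]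
        rfl
    | succ k => rw [covM_iter c d₁ d₂ α hα γ hγ k s, proj_cons]
  unfold tensionM tensionField
  have h1 : (covM c γ)^[2*r-1] (deriv γ) s
      = Fin.cons 0 (d₂^(2*r) • ((cov 0 c α)^[2*r-1] (deriv α)) (d₂*s)) := by
    have e1 : 2*r-1 = (2*r-2)+1 := by omega
    have e2 : (2*r-2)+2 = 2*r := by omega
    rw [e1, covM_iter c d₁ d₂ α hα γ hγ (2*r-2) s, e2]
  rw [h1]
  have h2 : ∀ ℓ ∈ Finset.range (r-1),
      ((-1 : ℝ)^ℓ) • curvOpM c ((covM c γ)^[2*r-3-ℓ] (deriv γ) s)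
          ((covM c γ)^[ℓ] (deriv γ) s) (deriv γ s)
      = Fin.cons (0:ℝ) ((d₂^(2*r) * (-1:ℝ)^ℓ) •
          curvOp 0 c (((cov 0 c α)^[2*r-3-ℓ] (deriv α)) (d₂*s))
            (((cov 0 c α)^[ℓ] (deriv α)) (d₂*s)) (deriv α (d₂*s))) := by
    intro ℓ hℓ
    rw [Finset.mem_range] at hℓ
    have hz : proj (deriv γ s) = Fin.cons 0 (d₂ • deriv α (d₂*s)) := by
      have := hproj 0
      simpa using this
    rw [curvOpM_lift c _ _ _ _ _ _ (hproj (2*r-3-ℓ)) (hproj ℓ) hz,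
      curvOp_smul, smul_cons, mul_zero, smul_smul]
    congr 2
    rw [mul_assoc, ← pow_succ, ← pow_add,
      show 2*r-3-ℓ+1+(ℓ+1+1) = 2*r by omega, mul_comm]
  rw [Finset.sum_congr rfl h2, sum_cons_zero, cons_add, zero_add]
  congr 1
  rw [smul_add, Finset.smul_sum]
  congr 1
  simp only [smul_smul]

/-- For `γ(s) = (d₁s, α(d₂s))` in the Lorentzian product `M_c ≅ ℝ × S^{m−1}(c)`
built from a `3`-Frenet helix `α` of the round sphere, the curvatures of `γ` are constant,
`ε₁κ² + ε₃τ² ≠ 0`, and `γ` is proper `r`-harmonic iff `α` is proper `r`-harmonic. -/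
theorem stmt_17 (m r : ℕ) (hm : 4 ≤ m) (hr : 2 ≤ r) (c : ℝ) (hc : 0 < c)
    (α Nα Bα : ℝ → Fin m → ℝ)
    (hα : ContDiff ℝ (⊤ : ℕ∞) α) (hNα : ContDiff ℝ (⊤ : ℕ∞) Nα) (hBα : ContDiff ℝ (⊤ : ℕ∞) Bα)
    (hsph : ∀ s, pform 0 (α s) (α s) = 1 / c)
    (hunitα : ∀ s, pform 0 (deriv α s) (deriv α s) = 1)
    (hNαn : ∀ s, pform 0 (Nα s) (Nα s) = 1)
    (hBαn : ∀ s, pform 0 (Bα s) (Bα s) = 1)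
    (hTNα : ∀ s, pform 0 (deriv α s) (Nα s) = 0)
    (hTBα : ∀ s, pform 0 (deriv α s) (Bα s) = 0)
    (hNBα : ∀ s, pform 0 (Nα s) (Bα s) = 0)
    (hNαtan : ∀ s, pform 0 (Nα s) (α s) = 0)
    (hBαtan : ∀ s, pform 0 (Bα s) (α s) = 0)
    (κα τα : ℝ) (hκα : 0 < κα) (hτα : 0 < τα)
    (hFα1 : ∀ s, cov 0 c α (deriv α) s = κα • Nα s)
    (hFα2 : ∀ s, cov 0 c α Nα s = (-κα) • deriv α s + τα • Bα s)
    (hFα3 : ∀ s, cov 0 c α Bα s = (-τα) • Nα s)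
    (ε₁ d₁ d₂ : ℝ) (hε₁ : ε₁ = 1 ∨ ε₁ = -1) (hd₁ : d₁ ≠ 0)
    (hpos : 0 < ε₁ + d₁ ^ 2) (hd₂ : d₂ = Real.sqrt (ε₁ + d₁ ^ 2))
    (γ : ℝ → Fin (m+1) → ℝ)
    (hγdef : γ = fun s => Fin.cons (d₁ * s) (α (d₂ * s)))
    (N B : ℝ → Fin (m+1) → ℝ) (hN : ContDiff ℝ (⊤ : ℕ∞) N) (hB : ContDiff ℝ (⊤ : ℕ∞) B)
    (ε₂ ε₃ : ℝ) (hε₂ : ε₂ = 1 ∨ ε₂ = -1) (hε₃ : ε₃ = 1 ∨ ε₃ = -1)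
    (hTT : ∀ s, pform 1 (deriv γ s) (deriv γ s) = ε₁)
    (hNN : ∀ s, pform 1 (N s) (N s) = ε₂)
    (hBB : ∀ s, pform 1 (B s) (B s) = ε₃)
    (hTN : ∀ s, pform 1 (deriv γ s) (N s) = 0)
    (hTB : ∀ s, pform 1 (deriv γ s) (B s) = 0)
    (hNB : ∀ s, pform 1 (N s) (B s) = 0)
    (hNtan : ∀ s, pform 1 (N s) (proj (γ s)) = 0)
    (hBtan : ∀ s, pform 1 (B s) (proj (γ s)) = 0)
    (κ τ : ℝ → ℝ) (hκ : ContDiff ℝ (⊤ : ℕ∞) κ) (hτ : ContDiff ℝ (⊤ : ℕ∞) τ)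
    (hκpos : ∀ s, 0 < κ s) (hτpos : ∀ s, 0 < τ s)
    (hFr1 : ∀ s, covM c γ (deriv γ) s = (ε₂ * κ s) • N s)
    (hFr2 : ∀ s, covM c γ N s = (-(ε₁ * κ s)) • deriv γ s + (ε₃ * τ s) • B s)
    (hFr3 : ∀ s, covM c γ B s = (-(ε₂ * τ s)) • N s)
    (hcond : 0 < ε₃ * (τα ^ 2 - ε₁ * d₁ ^ 2 * κα ^ 2)) :
    (∃ κ₀ : ℝ, ∀ s, κ s = κ₀) ∧ (∃ τ₀ : ℝ, ∀ s, τ s = τ₀) ∧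
    (∀ s, ε₁ * (κ s) ^ 2 + ε₃ * (τ s) ^ 2 ≠ 0) ∧
    ((∀ s, tensionM c r γ s = 0) ↔ (∀ s, tensionField 0 c r α s = 0)) := by
  have hαT : ContDiff ℝ (⊤:ℕ∞) α := hα.of_le (by simp)
  have hNαT : ContDiff ℝ (⊤:ℕ∞) Nα := hNα.of_le (by simp)
  have hα' : ContDiff ℝ (⊤:ℕ∞) (deriv α) := (contDiff_infty_iff_deriv.mp hαT).2
  have he1 : ε₁^2 = 1 := by rcases hε₁ with h|h <;> rw [h] <;> norm_num
  have he3 : ε₃^2 = 1 := by rcases hε₃ with h|h <;> rw [h] <;> norm_num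
  have he2sq : ε₂^2 = 1 := by rcases hε₂ with h|h <;> rw [h] <;> norm_num
  have hd₂pos : 0 < d₂ := by rw [hd₂]; exact Real.sqrt_pos.mpr hpos
  have hD : d₂^2 = ε₁ + d₁^2 := by rw [hd₂]; exact Real.sq_sqrt hpos.le
  have hCT : ∀ s, covM c γ (deriv γ) s = Fin.cons 0 ((d₂^2*κα) • Nα (d₂*s)) := by
    intro s
    have h01 := covM_iter c d₁ d₂ α hαT γ hγdef 0 s
    simp only [zero_add, Function.iterate_one] at h01
    rw [h01, hFα1 (d₂*s), smul_smul]
  have hκε : ∀ s, ε₂ * (κ s)^2 = (d₂^2*κα)^2 := by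
    intro s
    have hEq := (hFr1 s).symm.trans (hCT s)
    have hp := congrArg (fun v => pform 1 v v) hEq
    simp only [pform_smul_left, pform_smul_right, hNN s, pform_one_cons,
      hNαn (d₂*s)] at hp
    linear_combination hp + (-(ε₂*(κ s)^2))*he2sq
  have hKpos : 0 < d₂^2*κα := by positivity
  have he2 : ε₂ = 1 := by
    rcases hε₂ with h|h
    · exact h
    · exfalso
      have := hκε 0
      rw [h] at this
      nlinarith [hκpos 0, hKpos]
  have hκval : ∀ s, κ s = d₂^2*κα := by
    intro s
    have := hκε s
    rw [he2, one_mul] at this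
    nlinarith [hκpos s, hKpos]
  have hNs : ∀ s, N s = Fin.cons 0 (Nα (d₂*s)) := by
    intro s
    have hEq := (hFr1 s).symm.trans (hCT s)
    rw [he2, one_mul, hκval s] at hEq
    have h2 : (d₂^2*κα) • N s = (d₂^2*κα) • (Fin.cons 0 (Nα (d₂*s)) : Fin (m+1) → ℝ) := by
      rw [hEq, smul_cons, mul_zero]
    exact smul_right_injective _ (ne_of_gt hKpos) h2
  have hNfun : N = fun s => (Fin.cons (0:ℝ) ((1:ℝ) • Nα (d₂*s)) : Fin (m+1) → ℝ) := by
    funext s; rw [hNs s, one_smul]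
  have hCN : ∀ s, covM c γ N s
      = Fin.cons 0 (d₂ • ((-κα) • deriv α (d₂*s) + τα • Bα (d₂*s))) := by
    intro s
    rw [hγdef, hNfun,
      covM_cons c d₁ d₂ α Nα (hNαT.differentiable (by simp)) 0 1 s,
      one_mul, hFα2 (d₂*s)]
  have hdγ : ∀ s, deriv γ s = Fin.cons d₁ (d₂ • deriv α (d₂*s)) := by
    intro s
    rw [hγdef]
    exact deriv_gamma d₁ d₂ α (hαT.differentiable (by simp)) s
  have hτsq : ∀ s, ε₃ * (τ s)^2 = d₂^2*(τα^2 - ε₁*d₁^2*κα^2) := by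
    intro s
    have hEq : (ε₃ * τ s) • B s = covM c γ N s + (ε₁ * κ s) • deriv γ s := by
      rw [hFr2 s]
      funext i
      simp only [Pi.add_apply, Pi.smul_apply, smul_eq_mul, neg_smul, Pi.neg_apply, neg_mul]
      ring
    rw [hCN s, hdγ s, hκval s, smul_cons, cons_add] at hEq
    have hvec : d₂ • ((-κα) • deriv α (d₂*s) + τα • Bα (d₂*s))
          + (ε₁*(d₂^2*κα)) • (d₂ • deriv α (d₂*s))
        = (ε₁*(d₂^2*κα)*d₂ - d₂*κα) • deriv α (d₂*s) + (d₂*τα) • Bα (d₂*s) := by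
      funext i
      simp only [Pi.add_apply, Pi.smul_apply, smul_eq_mul, neg_smul, Pi.neg_apply, neg_mul]
      ring
    rw [hvec] at hEq
    have hp := congrArg (fun v => pform 1 v v) hEq
    simp only [pform_smul_left, pform_smul_right, hBB s, pform_one_cons, pform_zero_expand,
      hunitα (d₂*s), hTBα (d₂*s), hBαn (d₂*s)] at hp
    linear_combination hp + (-(ε₃*(τ s)^2)) * he3 + (κα^2*d₂^2*(d₂^2-ε₁)) * hD
      + (κα^2*d₂^2*(d₂^4-d₂^2*d₁^2-1)) * he1
  have hε₃ne : ε₃ ≠ 0 := by rcases hε₃ with h|h <;> rw [h] <;> norm_num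
  have hτconst : ∀ s, τ s = τ 0 := by
    intro s
    have h3 : (τ s)^2 = (τ 0)^2 :=
      mul_left_cancel₀ hε₃ne ((hτsq s).trans (hτsq 0).symm)
    nlinarith [hτpos s, hτpos 0]
  have hsum : ∀ s, ε₁*(κ s)^2 + ε₃*(τ s)^2 = d₂^2*(κα^2+τα^2) := by
    intro s
    rw [hκval s, hτsq s]
    linear_combination (d₂^2*κα^2*ε₁)*hD + (d₂^2*κα^2)*he1
  refine ⟨⟨d₂^2*κα, hκval⟩, ⟨τ 0, hτconst⟩, ?_, ?_⟩
  · intro s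
    rw [hsum s]
    nlinarith [hd₂pos, hκα, hτα]
  · constructor
    · intro h u
      have h0 := h (u/d₂)
      rw [tension_lift r hr c d₁ d₂ α hαT γ hγdef (u/d₂),
        show d₂*(u/d₂) = u by field_simp] at h0
      funext i
      have h1 := congrFun h0 i.succ
      simp only [Fin.cons_succ, Pi.smul_apply, smul_eq_mul, Pi.zero_apply] at h1
      have hd2r : d₂^(2*r) ≠ 0 := pow_ne_zero _ (ne_of_gt hd₂pos)
      have := (mul_eq_zero.mp h1).resolve_left hd2r
      simpa using this
    · intro h s
      rw [tension_lift r hr c d₁ d₂ α hαT γ hγdef s, h (d₂*s), smul_zero, cons_zero_zero]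
end
end
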